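/- arXiv:math/0611244 — 3 statements merged into one kernel-verified Lean document; each statement's English description precedes it below -/
import Mathlib

section
/- Let 0 ≠ f ∈ m ⊆ P = ℂ[[x₁,…,xₙ]] with Der_f ⊆ Δ(P). Suppose σ₁,…,σ_s ∈ Der_f and σ'₁,…,σ'_{s'} ∈ Der_f are two ℂ-linearly independent families of diagonal derivations such that: every δ ∈ Der_f whose degree-0 part commutes with A(σᵢ) for all i satisfies δ_S ∈ ⟨σ₁,…,σ_s⟩_ℂ, and every δ ∈ Der_f whose degree-0 part commutes with A(σ'ⱼ) for all j satisfies δ_S ∈ ⟨σ'₁,…,σ'_{s'}⟩_ℂ. Then s = s'. -/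
noncomputable section
set_option synthInstance.maxHeartbeats 1000000
set_option maxHeartbeats 1000000

/-- The formal power series ring `P = ℂ[[x₁,…,xₙ]]`. -/
abbrev P (n : ℕ) : Type := MvPowerSeries (Fin n) ℂ

/-- The space of ℂ-linear derivations of `P`. -/
abbrev Der (n : ℕ) : Type := Derivation ℂ (P n) (P n)

/-- The maximal ideal `m = (x₁,…,xₙ)` of `P`. -/
def mIdeal (n : ℕ) : Ideal (P n) :=
  Ideal.span (Set.range (MvPowerSeries.X : Fin n → P n))

/-- The degree-0 part of a derivation: the matrix `A(δ)` whose `(i,j)` entry is the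
coefficient of `xᵢ` in `δ(xⱼ)`. -/
def matrixOf {n : ℕ} (δ : Der n) : Matrix (Fin n) (Fin n) ℂ :=
  Matrix.of fun i j => MvPowerSeries.coeff (Finsupp.single i 1) (δ (MvPowerSeries.X j))

/-- A matrix over ℂ is diagonalizable (= semisimple) if it is conjugate to a diagonal
matrix. -/
def IsDiagonalizable {n : ℕ} (S : Matrix (Fin n) (Fin n) ℂ) : Prop :=
  ∃ Q : GL (Fin n) ℂ, (((Q⁻¹ : GL (Fin n) ℂ) : Matrix (Fin n) (Fin n) ℂ) * S *
    (Q : Matrix (Fin n) (Fin n) ℂ)).IsDiag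

/-- The family `σ` of derivations is maximal among degree-0 semisimple symmetries of `f`:
every logarithmic derivation `δ ∈ Der_f` whose degree-0 part commutes with all `A(σᵢ)` has
semisimple part `δ_S` (given by the semisimple summand of the Jordan–Chevalley
decomposition `A(δ) = S + N`) in the ℂ-span of the `A(σᵢ)`. -/
def IsMaximalDiagonalFamily {n s : ℕ} (f : P n) (σ : Fin s → Der n) : Prop :=
  ∀ δ : Der n, δ f ∈ Ideal.span {f} →
    (∀ i, Commute (matrixOf δ) (matrixOf (σ i))) →
    ∀ S N : Matrix (Fin n) (Fin n) ℂ, matrixOf δ = S + N → Commute S N →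
      IsNilpotent N → IsDiagonalizable S →
      S ∈ Submodule.span ℂ (Set.range fun i => matrixOf (σ i))

/-!
A diagonal logarithmic derivation has a diagonal, hence semisimple, degree-0 part commuting with
that of every other diagonal derivation. Maximality of either family therefore puts the matrices
of the other family into its span, so both families span the same space of diagonal matrices.
A derivation of `R⟦x₁,…,xₙ⟧` vanishing on the variables vanishes: writing
`f = p + ∑ⱼ xⱼ ^ (dⱼ + 1) * gⱼ` with `p` a polynomial, its value at `f` has no monomial `x ^ d`.
Hence a diagonal derivation is determined by its matrix, linear independence passes from the
derivations to their matrices, and `s` and `s'` both equal the dimension of the common span.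
-/

namespace MvPowerSeries

open Finsupp

variable {σ R : Type*} [CommSemiring R]

theorem exists_eq_trunc'_add_sum_X_pow_mul [Fintype σ] [DecidableEq σ] (b : σ →₀ ℕ)
    (f : MvPowerSeries σ R) :
    ∃ g : σ → MvPowerSeries σ R, f = trunc' R b f + ∑ s, X s ^ (b s + 1) * g s := by
  have hexceed : ∀ e : σ →₀ ℕ, ∃ o : Option σ,
      (o = none ↔ e ≤ b) ∧ ∀ s, o = Option.some s → b s < e s := by
    intro e
    by_cases he : e ≤ b
    · exact ⟨none, by simpa using he, by simp⟩
    · obtain ⟨s, hs⟩ : ∃ s, b s < e s := by simpa [Finsupp.le_def] using he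
      exact ⟨Option.some s, by simpa using he, by simp_all⟩
  -- `c e` picks one coordinate in which `e` exceeds `b`, so each monomial outside the box `≤ b`
  -- is assigned to exactly one `g s`.
  choose c hc_none hc_some using hexceed
  let g : σ → MvPowerSeries σ R := fun s e =>
    if c (e + single s (b s + 1)) = Option.some s then coeff (e + single s (b s + 1)) f else 0
  refine ⟨g, ?_⟩
  ext e
  have hterm : ∀ s, coeff e (X s ^ (b s + 1) * g s) =
      if c e = Option.some s then coeff e f else 0 := by
    intro s
    rw [X_pow_eq, coeff_monomial_mul, one_mul]
    by_cases hle : single s (b s + 1) ≤ e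
    · rw [if_pos hle]
      change (if c (e - _ + _) = _ then _ else _) = _
      rw [tsub_add_cancel_of_le hle]
    · rw [if_neg hle, if_neg]
      intro hs
      exact hle (single_le_iff.2 (hc_some e s hs))
  rw [map_add, map_sum, Finset.sum_congr rfl fun s _ => hterm s, MvPolynomial.coeff_coe,
    coeff_trunc']
  by_cases he : e ≤ b
  · simp [he, (hc_none e).2 he]
  · obtain ⟨s, hs⟩ := Option.ne_none_iff_exists'.1 (mt (hc_none e).1 he)
    simp [he, hs]

theorem derivation_map_coe_eq_zero (D : Derivation R (MvPowerSeries σ R) (MvPowerSeries σ R))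
    (h : ∀ s, D (X s) = 0) (p : MvPolynomial σ R) : D p = 0 := by
  induction p using MvPolynomial.induction_on with
  | C a => rw [MvPolynomial.coe_C]; exact D.map_algebraMap a
  | add p q hp hq => rw [MvPolynomial.coe_add, map_add, hp, hq, add_zero]
  | mul_X p s hp => rw [MvPolynomial.coe_mul, MvPolynomial.coe_X, D.leibniz, hp, h, smul_zero,
      smul_zero, add_zero]

theorem derivation_eq_zero_of_map_X [Finite σ]
    (D : Derivation R (MvPowerSeries σ R) (MvPowerSeries σ R)) (h : ∀ s, D (X s) = 0) :
    D = 0 := by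
  classical
  have := Fintype.ofFinite σ
  ext f d
  obtain ⟨g, hg⟩ := exists_eq_trunc'_add_sum_X_pow_mul d f
  have hX_pow : ∀ s k, D (X s ^ k) = 0 := fun s k => by
    rw [D.leibniz_pow, h, smul_zero, smul_zero]
  rw [Derivation.zero_apply, map_zero, hg, map_add, derivation_map_coe_eq_zero D h, zero_add,
    map_sum, map_sum]
  refine Finset.sum_eq_zero fun s _ => ?_
  rw [D.leibniz, hX_pow, smul_zero, add_zero, smul_eq_mul, X_pow_eq, coeff_monomial_mul,
    if_neg fun hle => ?_]
  simpa using hle s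

end MvPowerSeries

open MvPowerSeries

def IsDiagonalDerivation {n : ℕ} (δ : Der n) : Prop :=
  ∃ c : Fin n → ℂ, ∀ j, δ (X j) = c j • X j

theorem matrixOf_eq_diagonal {n : ℕ} {δ : Der n} {c : Fin n → ℂ}
    (h : ∀ j, δ (X j) = c j • X j) : matrixOf δ = Matrix.diagonal c := by
  ext i j
  rw [matrixOf, Matrix.of_apply, h j, coeff_smul, coeff_X, Matrix.diagonal_apply]
  by_cases hij : i = j
  · simp [hij]
  · simp [hij, Finsupp.single_left_inj one_ne_zero]

theorem IsDiagonalDerivation.commute_matrixOf {n : ℕ} {δ δ' : Der n}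
    (hδ : IsDiagonalDerivation δ) (hδ' : IsDiagonalDerivation δ') :
    Commute (matrixOf δ) (matrixOf δ') := by
  obtain ⟨c, hc⟩ := hδ
  obtain ⟨c', hc'⟩ := hδ'
  rw [matrixOf_eq_diagonal hc, matrixOf_eq_diagonal hc']
  exact Matrix.commute_diagonal c c'

theorem IsDiagonalDerivation.isDiagonalizable_matrixOf {n : ℕ} {δ : Der n}
    (hδ : IsDiagonalDerivation δ) : IsDiagonalizable (matrixOf δ) := by
  obtain ⟨c, hc⟩ := hδ
  exact ⟨1, by simp [matrixOf_eq_diagonal hc, Matrix.isDiag_diagonal]⟩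

theorem linearIndependent_matrixOf {n s : ℕ} {σ : Fin s → Der n}
    (hdiag : ∀ i, IsDiagonalDerivation (σ i)) (hli : LinearIndependent ℂ σ) :
    LinearIndependent ℂ fun i => matrixOf (σ i) := by
  choose c hc using hdiag
  rw [Fintype.linearIndependent_iff] at hli ⊢
  intro a ha
  refine hli a (derivation_eq_zero_of_map_X _ fun j => ?_)
  have hjj : ∑ i, a i * c i j = 0 := by
    simpa [matrixOf_eq_diagonal (hc _), Matrix.sum_apply] using congrFun (congrFun ha j) j
  rw [← Derivation.coeFnAddMonoidHom_apply, map_sum, Finset.sum_apply]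
  simp [hc, smul_smul, ← Finset.sum_smul, hjj]

theorem finrank_span_matrixOf {n s : ℕ} {σ : Fin s → Der n}
    (hdiag : ∀ i, IsDiagonalDerivation (σ i)) (hli : LinearIndependent ℂ σ) :
    Module.finrank ℂ (Submodule.span ℂ (Set.range fun i => matrixOf (σ i))) = s := by
  rw [finrank_span_eq_card (linearIndependent_matrixOf hdiag hli), Fintype.card_fin]

theorem IsMaximalDiagonalFamily.matrixOf_mem_span {n s : ℕ} {f : P n} {σ : Fin s → Der n}
    (hmax : IsMaximalDiagonalFamily f σ) (hdiag : ∀ i, IsDiagonalDerivation (σ i)) {δ : Der n}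
    (hδ : IsDiagonalDerivation δ) (hlog : δ f ∈ Ideal.span {f}) :
    matrixOf δ ∈ Submodule.span ℂ (Set.range fun i => matrixOf (σ i)) :=
  hmax δ hlog (fun i => hδ.commute_matrixOf (hdiag i)) _ 0 (add_zero _).symm
    (Commute.zero_right _) IsNilpotent.zero hδ.isDiagonalizable_matrixOf

theorem IsMaximalDiagonalFamily.span_matrixOf_le {n s t : ℕ} {f : P n} {σ : Fin s → Der n}
    {τ : Fin t → Der n} (hmax : IsMaximalDiagonalFamily f σ)
    (hdiag : ∀ i, IsDiagonalDerivation (σ i)) (hτdiag : ∀ i, IsDiagonalDerivation (τ i))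
    (hτlog : ∀ i, τ i f ∈ Ideal.span {f}) :
    Submodule.span ℂ (Set.range fun i => matrixOf (τ i)) ≤
      Submodule.span ℂ (Set.range fun i => matrixOf (σ i)) :=
  Submodule.span_le.2 <| Set.range_subset_iff.2 fun i =>
    hmax.matrixOf_mem_span hdiag (hτdiag i) (hτlog i)

theorem card_maximal_diagonal_family_unique_general {n : ℕ} (f : P n)
    {s s' : ℕ} (σ : Fin s → Der n) (σ' : Fin s' → Der n)
    (hσlog : ∀ i, σ i f ∈ Ideal.span {f}) (hσ'log : ∀ i, σ' i f ∈ Ideal.span {f})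
    (hσdiag : ∀ i, ∃ c : Fin n → ℂ, ∀ j, σ i (MvPowerSeries.X j) = c j • MvPowerSeries.X j)
    (hσ'diag : ∀ i, ∃ c : Fin n → ℂ, ∀ j, σ' i (MvPowerSeries.X j) = c j • MvPowerSeries.X j)
    (hli : LinearIndependent ℂ σ) (hli' : LinearIndependent ℂ σ')
    (hmax : IsMaximalDiagonalFamily f σ) (hmax' : IsMaximalDiagonalFamily f σ') :
    s = s' := by
  have hspan : Submodule.span ℂ (Set.range fun i => matrixOf (σ i)) =
      Submodule.span ℂ (Set.range fun i => matrixOf (σ' i)) :=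
    le_antisymm (hmax'.span_matrixOf_le hσ'diag hσdiag hσlog)
      (hmax.span_matrixOf_le hσdiag hσ'diag hσ'log)
  rw [← finrank_span_matrixOf hσdiag hli, ← finrank_span_matrixOf hσ'diag hli', hspan]

/-- Uniqueness of the number of independent diagonal symmetries: if `σ₁,…,σ_s` and
`σ'₁,…,σ'_{s'}` are two ℂ-linearly independent families of diagonal logarithmic derivations
along `0 ≠ f ∈ m` (with `Der_f ⊆ Δ(P)`), each maximal in the sense that any `δ ∈ Der_f`
whose degree-0 part commutes with the family has its semisimple part in the family's
ℂ-span, then `s = s'`. -/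
theorem card_maximal_diagonal_family_unique {n : ℕ} (hn : 0 < n)
    (f : P n) (hf0 : f ≠ 0) (hfm : f ∈ mIdeal n)
    (hDelta : ∀ δ : Der n, δ f ∈ Ideal.span {f} → ∀ g ∈ mIdeal n, δ g ∈ mIdeal n)
    {s s' : ℕ} (σ : Fin s → Der n) (σ' : Fin s' → Der n)
    (hσlog : ∀ i, σ i f ∈ Ideal.span {f}) (hσ'log : ∀ i, σ' i f ∈ Ideal.span {f})
    (hσdiag : ∀ i, ∃ c : Fin n → ℂ, ∀ j, σ i (MvPowerSeries.X j) = c j • MvPowerSeries.X j)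
    (hσ'diag : ∀ i, ∃ c : Fin n → ℂ, ∀ j, σ' i (MvPowerSeries.X j) = c j • MvPowerSeries.X j)
    (hli : LinearIndependent ℂ σ) (hli' : LinearIndependent ℂ σ')
    (hmax : IsMaximalDiagonalFamily f σ) (hmax' : IsMaximalDiagonalFamily f σ') :
    s = s' :=
  card_maximal_diagonal_family_unique_general f σ σ' hσlog hσ'log hσdiag hσ'diag hli hli' hmax hmax'
end
end

section
/- Let P = ℂ[[x₁,…,xₙ]] and let σ be a diagonal derivation of P with integer eigenvalues, i.e. σ(xⱼ) = cⱼ·xⱼ with cⱼ ∈ ℤ for all j. If 0 ≠ f ∈ P satisfies σ(f) ∈ (f), then the principal ideal (f) has a σ-equivariant generator: there exist a unit u ∈ P and an integer λ such that σ(u·f) = λ·(u·f). -/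
/-!
From `σ f = g f` one gets `σᵏ f = gₖ f` with `gₖ₊₁ = σ gₖ + gₖ g`, while `σᵏ` multiplies the
coefficient of `x^d` by `w(d)ᵏ`, `w(d) = Σⱼ cⱼ dⱼ`. The geometric sequences `(aᵏ)ₖ` are linearly
independent, so some linear functional `L` on sequences sends `(aᵏ)ₖ` to `1` if `a = λ` and to
`0` otherwise. Applying `L` coefficientwise to `(gₖ)ₖ` gives a series `u` such that `u f` is the
weight-`λ` part of `f`, hence `σ (u f) = λ u f`. Choosing `λ = w(d₀)` for a minimal exponent `d₀`
of `f`, the coefficient of `x^{d₀}` in `u f` is `u(0) f_{d₀} = f_{d₀} ≠ 0`, so `u` is a unit.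
-/

namespace Derivation

variable {R A : Type*} [CommSemiring R] [CommSemiring A] [Algebra R A]

def iterateCofactor (D : Derivation R A A) (g : A) : ℕ → A
  | 0 => 1
  | k + 1 => D (D.iterateCofactor g k) + D.iterateCofactor g k * g

theorem iterate_apply_eq_iterateCofactor_mul (D : Derivation R A A) {f g : A} (h : D f = g * f)
    (k : ℕ) : D^[k] f = D.iterateCofactor g k * f := by
  induction k with
  | zero => simp [iterateCofactor]
  | succ k ih =>
    rw [Function.iterate_succ_apply', ih, leibniz, h, iterateCofactor, smul_eq_mul, smul_eq_mul]
    ring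

end Derivation

theorem LinearIndependent.exists_dual_apply_eq_ite {K V ι : Type*} [DivisionRing K]
    [AddCommGroup V] [Module K V] [DecidableEq ι] {v : ι → V} (hv : LinearIndependent K v)
    (i : ι) : ∃ L : Module.Dual K V, ∀ j, L (v j) = if j = i then 1 else 0 := by
  obtain ⟨L, hL⟩ := LinearMap.exists_extend (Finsupp.lapply i ∘ₗ hv.repr)
  refine ⟨L, fun j => ?_⟩
  have hj : v j ∈ Submodule.span K (Set.range v) := Submodule.subset_span ⟨j, rfl⟩
  have := congrArg (fun F => F ⟨v j, hj⟩) hL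
  simp only [LinearMap.comp_apply, Submodule.subtype_apply, Finsupp.lapply_apply] at this
  rw [this, hv.repr_eq_single j _ rfl, Finsupp.single_apply]

theorem linearIndependent_pow_seq (K : Type*) [CommRing K] [IsDomain K] :
    LinearIndependent K (fun (a : K) (k : ℕ) => a ^ k) :=
  ((linearIndependent_monoidHom (Multiplicative ℕ) K).comp _ (powersHom K).injective).map'
    (LinearMap.funLeft K K Multiplicative.ofAdd) <| LinearMap.ker_eq_bot.mpr <|
      LinearMap.funLeft_injective_of_surjective _ _ _ Multiplicative.ofAdd.surjective

namespace MvPowerSeries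

variable {ι R : Type*}

theorem coeff_iterate_of_coeff_apply_eq_mul [Semiring R]
    {D : MvPowerSeries ι R → MvPowerSeries ι R} {w : (ι →₀ ℕ) → R}
    (hD : ∀ φ d, coeff d (D φ) = w d * coeff d φ) (k : ℕ) (φ : MvPowerSeries ι R)
    (d : ι →₀ ℕ) : coeff d (D^[k] φ) = w d ^ k * coeff d φ := by
  induction k with
  | zero => simp
  | succ k ih => rw [Function.iterate_succ_apply', hD, ih, pow_succ', mul_assoc]

theorem coeff_mul_of_forall_lt_eq_zero [Semiring R] (u : MvPowerSeries ι R)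
    {f : MvPowerSeries ι R} {d₀ : ι →₀ ℕ} (h : ∀ e < d₀, coeff e f = 0) :
    coeff d₀ (u * f) = constantCoeff u * coeff d₀ f := by
  classical
  rw [coeff_mul, Finset.sum_eq_single_of_mem (0, d₀) (by simp)]
  · simp
  · rintro ⟨e₁, e₂⟩ he hne
    rw [Finset.HasAntidiagonal.mem_antidiagonal] at he
    have hlt : e₂ < d₀ := by
      refine lt_of_le_of_ne (he ▸ le_add_self) fun h₂ => hne ?_
      subst h₂
      simp_all
    rw [h e₂ hlt, mul_zero]

def applyCoeffwise [CommSemiring R] (L : (ℕ → R) →ₗ[R] R) (G : ℕ → MvPowerSeries ι R) :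
    MvPowerSeries ι R :=
  fun e => L fun k => coeff e (G k)

theorem coeff_applyCoeffwise [CommSemiring R] (L : (ℕ → R) →ₗ[R] R) (G : ℕ → MvPowerSeries ι R)
    (e : ι →₀ ℕ) : coeff e (applyCoeffwise L G) = L fun k => coeff e (G k) :=
  rfl

theorem coeff_applyCoeffwise_mul [CommSemiring R] (L : (ℕ → R) →ₗ[R] R)
    (G : ℕ → MvPowerSeries ι R) (f : MvPowerSeries ι R) (d : ι →₀ ℕ) :
    coeff d (applyCoeffwise L G * f) = L fun k => coeff d (G k * f) := by
  classical
  have hseq : (fun k => coeff d (G k * f)) =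
      ∑ p ∈ Finset.HasAntidiagonal.antidiagonal d, coeff p.2 f • fun k => coeff p.1 (G k) := by
    ext k
    rw [coeff_mul]
    simp [mul_comm]
  rw [hseq, map_sum, coeff_mul]
  simp [coeff_applyCoeffwise, mul_comm]

theorem exists_mul_eq_eigencomponent {K : Type*} [Field K] [DecidableEq K]
    (D : Derivation K (MvPowerSeries ι K) (MvPowerSeries ι K))
    {w : (ι →₀ ℕ) → K} (hD : ∀ φ d, coeff d (D φ) = w d * coeff d φ)
    {f g : MvPowerSeries ι K} (hfg : D f = g * f) (a : K) :
    ∃ u : MvPowerSeries ι K, ∀ d, coeff d (u * f) = if w d = a then coeff d f else 0 := by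
  obtain ⟨L, hL⟩ := (linearIndependent_pow_seq K).exists_dual_apply_eq_ite a
  refine ⟨applyCoeffwise L (D.iterateCofactor g), fun d => ?_⟩
  have hseq : (fun k => coeff d (D.iterateCofactor g k * f)) = coeff d f • fun k => w d ^ k := by
    ext k
    rw [← D.iterate_apply_eq_iterateCofactor_mul hfg, coeff_iterate_of_coeff_apply_eq_mul hD]
    simp [mul_comm]
  rw [coeff_applyCoeffwise_mul, hseq, map_smul, hL, smul_eq_mul, mul_ite, mul_one, mul_zero]

end MvPowerSeries

open MvPowerSeries

theorem equivariant_generator_general {n : ℕ} (c : Fin n → ℤ)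
    (σ : Derivation ℂ (MvPowerSeries (Fin n) ℂ) (MvPowerSeries (Fin n) ℂ))
    (hσ : ∀ (g : MvPowerSeries (Fin n) ℂ) (d : Fin n →₀ ℕ),
      MvPowerSeries.coeff d (σ g) = (∑ j, (c j : ℂ) * (d j : ℂ)) * MvPowerSeries.coeff d g)
    (f : MvPowerSeries (Fin n) ℂ) (hf0 : f ≠ 0)
    (hlog : σ f ∈ Ideal.span {f}) :
    ∃ (u : (MvPowerSeries (Fin n) ℂ)ˣ) (lam : ℤ),
      σ ((u : MvPowerSeries (Fin n) ℂ) * f) =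
        (lam : ℂ) • ((u : MvPowerSeries (Fin n) ℂ) * f) := by
  classical
  obtain ⟨g, hg⟩ := Ideal.mem_span_singleton'.mp hlog
  obtain ⟨d₀, hd₀⟩ := exists_minimal_of_wellFoundedLT (fun d => coeff d f ≠ 0) <| by
    by_contra! h
    exact hf0 (ext h)
  set lam : ℤ := ∑ j, c j * d₀ j
  obtain ⟨u, hu⟩ := exists_mul_eq_eigencomponent σ hσ hg.symm (lam : ℂ)
  have hu₀ : constantCoeff u = 1 := by
    have h := coeff_mul_of_forall_lt_eq_zero u fun e he => not_not.mp (hd₀.not_prop_of_lt he)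
    rw [hu d₀, if_pos (by push_cast [lam]; rfl)] at h
    exact (mul_eq_right₀ hd₀.prop).mp h.symm
  obtain ⟨U, rfl⟩ := isUnit_iff_constantCoeff.mpr (hu₀ ▸ isUnit_one)
  refine ⟨U, lam, ext fun d => ?_⟩
  rw [hσ, map_smul, smul_eq_mul, hu]
  split_ifs with h <;> simp [h]

/-- Let `σ` be the diagonal derivation of `P = ℂ[[x₁,…,xₙ]]` with integer eigenvalues,
`σ(xⱼ) = cⱼ·xⱼ` with `cⱼ ∈ ℤ` (so `σ` multiplies the coefficient of `x^d` by `Σⱼ cⱼ·dⱼ`).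
If `0 ≠ f ∈ P` satisfies `σ(f) ∈ (f)`, then `(f)` has a `σ`-equivariant generator:
there exist a unit `u ∈ P` and `λ ∈ ℤ` with `σ(u·f) = λ·(u·f)`. -/
theorem equivariant_generator {n : ℕ} (hn : 0 < n) (c : Fin n → ℤ)
    (σ : Derivation ℂ (MvPowerSeries (Fin n) ℂ) (MvPowerSeries (Fin n) ℂ))
    (hσ : ∀ (g : MvPowerSeries (Fin n) ℂ) (d : Fin n →₀ ℕ),
      MvPowerSeries.coeff d (σ g) = (∑ j, (c j : ℂ) * (d j : ℂ)) * MvPowerSeries.coeff d g)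
    (f : MvPowerSeries (Fin n) ℂ) (hf0 : f ≠ 0)
    (hlog : σ f ∈ Ideal.span {f}) :
    ∃ (u : (MvPowerSeries (Fin n) ℂ)ˣ) (lam : ℤ),
      σ ((u : MvPowerSeries (Fin n) ℂ) * f) =
        (lam : ℂ) • ((u : MvPowerSeries (Fin n) ℂ) * f) :=
  equivariant_generator_general c σ hσ f hf0 hlog
end

section
/- Let P = ℂ[[x₁,…,xₙ]], let σ be a ℂ-linear derivation of P, and let I be an ideal of P with σ(I) ⊆ I. Then every minimal prime ideal p over I also satisfies σ(p) ⊆ p. -/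
noncomputable section
set_option synthInstance.maxHeartbeats 1000000
set_option maxHeartbeats 1000000

section Aux

variable {A : Type*} [CommRing A]

/-- If `p` is a minimal prime over `I` and `x ∈ p`, then some power of `x` multiplied by an
element outside `p` lies in `I`. -/
lemma exists_mul_pow_mem_of_mem_minPrimes {I p : Ideal A} (hp : p ∈ I.minimalPrimes)
    {x : A} (hx : x ∈ p) : ∃ s ∉ p, ∃ m : ℕ, s * x ^ m ∈ I := by
  haveI hpp : p.IsPrime := hp.1.1
  by_contra hcon
  push_neg at hcon
  have one_np : (1 : A) ∉ p := fun h => hpp.ne_top ((Ideal.eq_top_iff_one p).mpr h)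
  let T : Submonoid A :=
    { carrier := {r | ∃ s ∉ p, ∃ m : ℕ, s * x ^ m = r}
      one_mem' := ⟨1, one_np, 0, by ring⟩
      mul_mem' := by
        rintro a b ⟨s, hs, m, rfl⟩ ⟨t, ht, k, rfl⟩
        exact ⟨s * t, fun h => ((hpp.mem_or_mem h).elim hs ht), m + k, by ring⟩ }
  have hdisj : Disjoint (I : Set A) (T : Set A) := by
    rw [Set.disjoint_left]
    rintro r hr ⟨s, hs, m, rfl⟩
    exact hcon s hs m hr
  obtain ⟨q, hq, hIq, hdq⟩ := Ideal.exists_le_prime_disjoint I T hdisj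
  have hqp : q ≤ p := by
    intro y hy
    by_contra hyp
    exact Set.disjoint_left.mp hdq hy ⟨y, hyp, 0, by ring⟩
  have hpq : p ≤ q := hp.2 ⟨hq, hIq⟩ hqp
  exact Set.disjoint_left.mp hdq (hpq hx) ⟨1, one_np, 1, by ring⟩

variable [Algebra ℂ A]

lemma isUnit_natCast_of_ne_zero {k : ℕ} (hk : k ≠ 0) : IsUnit (k : A) := by
  have h1 : IsUnit ((k : ℂ)) := isUnit_iff_ne_zero.mpr (Nat.cast_ne_zero.mpr hk)
  have h2 := h1.map (algebraMap ℂ A)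
  rwa [map_natCast] at h2

/-- In a differential ideal, from `g^i * (σ g)^j ∈ J` we can trade a power of `g` for two
powers of `σ g`. -/
lemma pow_deriv_mem_of_pow_mem (σ : Derivation ℂ A A) {J : Ideal A}
    (hJ : ∀ a ∈ J, σ a ∈ J) (g : A) :
    ∀ i j : ℕ, g ^ i * (σ g) ^ j ∈ J → (σ g) ^ (j + 2 * i) ∈ J := by
  intro i
  induction i with
  | zero => intro j h; simpa using h
  | succ i ih =>
    intro j h
    have h1 : σ (g ^ (i + 1) * (σ g) ^ j) ∈ J := hJ _ h
    have key : g ^ i * (σ g) ^ (j + 2) ∈ J := by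
      have e : σ g * σ (g ^ (i + 1) * (σ g) ^ j)
            - ((j : ℕ) : A) * σ (σ g) * (g ^ (i + 1) * (σ g) ^ j)
          = ((i + 1 : ℕ) : A) * (g ^ i * (σ g) ^ (j + 2)) := by
        rcases j with _ | j'
        · simp only [pow_zero, mul_one, Nat.cast_zero, zero_mul, sub_zero,
            Derivation.leibniz_pow, Nat.add_sub_cancel, smul_eq_mul, nsmul_eq_mul]
          push_cast
          ring
        · rw [Derivation.leibniz, Derivation.leibniz_pow, Derivation.leibniz_pow]
          simp only [smul_eq_mul, nsmul_eq_mul, Nat.add_sub_cancel]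
          push_cast
          ring
      have h2 := J.sub_mem (J.mul_mem_left (σ g) h1)
        (J.mul_mem_left (((j : ℕ) : A) * σ (σ g)) h)
      rw [e] at h2
      exact (Ideal.unit_mul_mem_iff_mem J (isUnit_natCast_of_ne_zero (Nat.succ_ne_zero i))).mp h2
    have h3 := ih (j + 2) key
    rwa [show j + 2 + 2 * i = j + 2 * (i + 1) by ring] at h3

end Aux

/-- Let `P = ℂ[[x₁,…,xₙ]]`, let `σ` be a ℂ-linear derivation of `P`, and let `I` be an
ideal of `P` with `σ(I) ⊆ I`. Then every minimal prime ideal `p` over `I` also satisfies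
`σ(p) ⊆ p`. -/
theorem minimalPrimes_stable_under_derivation {n : ℕ} (hn : 0 < n)
    (σ : Derivation ℂ (MvPowerSeries (Fin n) ℂ) (MvPowerSeries (Fin n) ℂ))
    (I : Ideal (MvPowerSeries (Fin n) ℂ)) (hI : ∀ g ∈ I, σ g ∈ I)
    (p : Ideal (MvPowerSeries (Fin n) ℂ)) (hp : p ∈ I.minimalPrimes) :
    ∀ g ∈ p, σ g ∈ p := by
  set P := MvPowerSeries (Fin n) ℂ
  intro g hg
  haveI hpp : p.IsPrime := hp.1.1
  have one_np : (1 : P) ∉ p := fun h => hpp.ne_top ((Ideal.eq_top_iff_one p).mpr h)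
  -- the saturation of `I` at the complement of `p`
  let J : Ideal P :=
    { carrier := {a | ∃ t ∉ p, t * a ∈ I}
      zero_mem' := ⟨1, one_np, by simpa using I.zero_mem⟩
      add_mem' := by
        rintro a b ⟨t, ht, hta⟩ ⟨u, hu, hub⟩
        refine ⟨t * u, fun h => ((hpp.mem_or_mem h).elim ht hu), ?_⟩
        have : t * u * (a + b) = u * (t * a) + t * (u * b) := by ring
        rw [this]
        exact I.add_mem (I.mul_mem_left u hta) (I.mul_mem_left t hub)
      smul_mem' := by
        rintro c a ⟨t, ht, hta⟩
        refine ⟨t, ht, ?_⟩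
        have : t * (c • a) = c * (t * a) := by rw [smul_eq_mul]; ring
        rw [this]
        exact I.mul_mem_left c hta }
  -- `J` is a differential ideal
  have hJd : ∀ a ∈ J, σ a ∈ J := by
    rintro a ⟨t, ht, hta⟩
    refine ⟨t * t, fun h => ((hpp.mem_or_mem h).elim ht ht), ?_⟩
    have e : t * t * σ a = t * σ (t * a) - σ t * (t * a) := by
      rw [Derivation.leibniz]
      simp only [smul_eq_mul]
      ring
    rw [e]
    exact I.sub_mem (I.mul_mem_left t (hI _ hta)) (I.mul_mem_left (σ t) hta)
  -- `J ≤ p`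
  have hJp : J ≤ p := by
    rintro a ⟨t, ht, hta⟩
    rcases hpp.mem_or_mem (hp.1.2 hta) with h | h
    · exact absurd h ht
    · exact h
  -- `p ≤ radical J`
  have hpJ : p ≤ J.radical := by
    intro x hx
    obtain ⟨s, hs, m, hsm⟩ := exists_mul_pow_mem_of_mem_minPrimes hp hx
    exact ⟨m, ⟨s, hs, hsm⟩⟩
  have hrad : J.radical = p := le_antisymm (hpp.radical_le_iff.mpr hJp) hpJ
  -- `g ∈ p = radical J`, so some power of `g` is in `J`
  obtain ⟨k, hk⟩ : ∃ k : ℕ, g ^ k ∈ J := hpJ hg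
  have h0 : g ^ k * (σ g) ^ 0 ∈ J := by simpa using hk
  have h1 := pow_deriv_mem_of_pow_mem σ hJd g k 0 h0
  have : σ g ∈ J.radical := ⟨0 + 2 * k, h1⟩
  rwa [hrad] at this
end
end
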